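/- (Bound on the symmetrized Morawetz weight) For the weight a with a(x) = R|x| for |x| > R and appropriate interpolation in between, if |x| > R/2 and |y| > R/2 then |(1 − R/(2|x|))x − (1 − R/(2|y|))y| ≲ |x−y|. -/
import Mathlib


/-- Bound on the symmetrized Morawetz weight: if `|x| > R/2` and `|y| > R/2`, then
`|(1 − R/(2|x|))x − (1 − R/(2|y|))y| ≲ |x−y|` with an absolute constant. -/
theorem stmt16 :
    ∃ C > (0:ℝ), ∀ (N : ℕ) (R : ℝ) (x y : EuclideanSpace ℝ (Fin N)),
      0 < R → R/2 < ‖x‖ → R/2 < ‖y‖ →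
      ‖(1 - R/(2*‖x‖)) • x - (1 - R/(2*‖y‖)) • y‖ ≤ C * ‖x - y‖ := by
  refine ⟨2, by norm_num, ?_⟩
  intro N R x y hR hx hy
  have hxpos : 0 < ‖x‖ := lt_trans (by positivity) hx
  have hypos : 0 < ‖y‖ := lt_trans (by positivity) hy
  have hRx : R / (2 * ‖x‖) < 1 := by
    rw [div_lt_one (by positivity)]; linarith
  have hRx0 : 0 < R / (2 * ‖x‖) := by positivity
  have key : (1 - R/(2*‖x‖)) • x - (1 - R/(2*‖y‖)) • y
      = (1 - R/(2*‖x‖)) • (x - y) + (R/(2*‖y‖) - R/(2*‖x‖)) • y := by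
    module
  have h1 : |1 - R/(2*‖x‖)| ≤ 1 := by
    rw [abs_le]; constructor <;> linarith
  have hnn : |‖x‖ - ‖y‖| ≤ ‖x - y‖ := abs_norm_sub_norm_le x y
  have h2 : |R/(2*‖y‖) - R/(2*‖x‖)| * ‖y‖ ≤ ‖x - y‖ := by
    have heq : R/(2*‖y‖) - R/(2*‖x‖) = R * (‖x‖ - ‖y‖) / (2 * ‖x‖ * ‖y‖) := by
      field_simp
    rw [heq, abs_div, abs_of_pos (show (0:ℝ) < 2 * ‖x‖ * ‖y‖ by positivity), abs_mul,
      abs_of_pos hR]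
    rw [div_mul_eq_mul_div, div_le_iff₀ (by positivity)]
    have : R * |‖x‖ - ‖y‖| * ‖y‖ ≤ (2 * ‖x‖) * |‖x‖ - ‖y‖| * ‖y‖ := by
      have : R ≤ 2 * ‖x‖ := by linarith
      nlinarith [mul_nonneg (mul_nonneg (sub_nonneg.2 this) (abs_nonneg (‖x‖ - ‖y‖))) hypos.le]
    calc R * |‖x‖ - ‖y‖| * ‖y‖ ≤ (2 * ‖x‖) * |‖x‖ - ‖y‖| * ‖y‖ := this
      _ ≤ ‖x - y‖ * (2 * ‖x‖ * ‖y‖) := by nlinarith [mul_nonneg (mul_nonneg hxpos.le hypos.le) (sub_nonneg.2 hnn)]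
  calc ‖(1 - R/(2*‖x‖)) • x - (1 - R/(2*‖y‖)) • y‖
      = ‖(1 - R/(2*‖x‖)) • (x - y) + (R/(2*‖y‖) - R/(2*‖x‖)) • y‖ := by rw [key]
    _ ≤ ‖(1 - R/(2*‖x‖)) • (x - y)‖ + ‖(R/(2*‖y‖) - R/(2*‖x‖)) • y‖ := norm_add_le _ _
    _ = |1 - R/(2*‖x‖)| * ‖x - y‖ + |R/(2*‖y‖) - R/(2*‖x‖)| * ‖y‖ := by
        rw [norm_smul, norm_smul, Real.norm_eq_abs, Real.norm_eq_abs]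
    _ ≤ 1 * ‖x - y‖ + ‖x - y‖ := by
        gcongr
    _ = 2 * ‖x - y‖ := by ring
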